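/- Completeness of the stochastic-invariant rule for AST: Let M be a finitely-branching MDP with absorbing terminal state ⊥ that is almost surely terminating from its initial state σ₀, and let p ∈ (0,1). Then for every σ ∈ Reach(σ₀) there exists a finite set Ψ_σ ⊆ S with σ ∈ Ψ_σ and ⊥ ∈ Ψ_σ such that (Ψ_σ, p) is a stochastic invariant for initial state σ and, for every scheduler 𝔰, ℙ_{𝔰,σ}(the run visits ⊥ or some state of the run lies outside Ψ_σ) = 1. -/

import Mathlib

open scoped ENNReal Classical

/-- A finitely-branching MDP on a state space `S`: each state has a nonempty finite
set of available actions, each a finitely-supported PMF on `S`. -/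
structure MDP (S : Type) where
  act : S → Finset (PMF S)
  act_nonempty : ∀ s, (act s).Nonempty
  act_finSupp : ∀ s, ∀ μ ∈ act s, (μ : PMF S).support.Finite

/-- A scheduler maps every history `(s₀, …, sₙ)` (given as the list of earlier
states `s₀, …, sₙ₋₁` together with the current state `sₙ`) to an available action. -/
structure Scheduler {S : Type} (M : MDP S) where
  choose : List S → S → PMF S
  choose_mem : ∀ hist s, choose hist s ∈ M.act s

namespace MDP

variable {S : Type}

/-- Reachability: `s'` is reachable from `σ` via a finite path each of whose steps
lies in the support of some available action. -/
inductive Reach (M : MDP S) (σ : S) : S → Prop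
  | refl : Reach M σ σ
  | step {s s' : S} (μ : PMF S) : Reach M σ s → μ ∈ M.act s → s' ∈ μ.support → Reach M σ s'

/-- Probability that the run (currently at `s`, with past history `hist`) visits the
set `T` within the next `k` steps, under scheduler `𝔰`. -/
noncomputable def hitProbAux (M : MDP S) (𝔰 : Scheduler M) (T : Set S) :
    ℕ → List S → S → ℝ≥0∞
  | 0, _, s => if s ∈ T then 1 else 0
  | k + 1, hist, s =>
      if s ∈ T then 1
      else ∑' s', (𝔰.choose hist s) s' * hitProbAux M 𝔰 T k (hist ++ [s]) s'

/-- Probability that the run started at `σ` visits `T` within the first `k` steps. -/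
noncomputable def hitProbWithin (M : MDP S) (𝔰 : Scheduler M) (σ : S) (T : Set S)
    (k : ℕ) : ℝ≥0∞ :=
  hitProbAux M 𝔰 T k [] σ

/-- Probability that the run started at `σ` ever visits `T`, under scheduler `𝔰`. -/
noncomputable def hitProb (M : MDP S) (𝔰 : Scheduler M) (σ : S) (T : Set S) : ℝ≥0∞ :=
  ⨆ k, hitProbWithin M 𝔰 σ T k

/-- The terminal state `term` is absorbing: the only action there is the Dirac PMF. -/
def Absorbing (M : MDP S) (term : S) : Prop :=
  M.act term = {PMF.pure term}

/-- Termination probability: infimum over schedulers of the probability of visiting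
the terminal state. -/
noncomputable def PrTerm (M : MDP S) (term σ : S) : ℝ≥0∞ :=
  ⨅ 𝔰 : Scheduler M, hitProb M 𝔰 σ {term}

/-- Almost-sure termination from `σ`. -/
def AST (M : MDP S) (term σ : S) : Prop := PrTerm M term σ = 1

/-- Mass a PMF assigns to a set. -/
noncomputable def mass (μ : PMF S) (A : Set S) : ℝ≥0∞ := ∑' a : A, μ a

/-- Expected value of a real-valued function under a (finitely supported) PMF. -/
noncomputable def expect (μ : PMF S) (V : S → ℝ) : ℝ := ∑' s, (μ s).toReal * V s

/-- `V` is a supermartingale function on the states reachable from `σ`. -/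
def SupermartingaleOn (M : MDP S) (σ : S) (V : S → ℝ) : Prop :=
  ∀ s, M.Reach σ s → ∀ μ ∈ M.act s, expect μ V ≤ V s

/-- `(Ψ, p)` is a stochastic invariant for initial state `σ`: under every scheduler the
probability that the run ever leaves `Ψ` is at most `p`. -/
def StochasticInvariant (M : MDP S) (σ : S) (Ψ : Set S) (p : ℝ) : Prop :=
  ⨆ 𝔰 : Scheduler M, hitProb M 𝔰 σ Ψᶜ ≤ ENNReal.ofReal p

end MDP

/-!
AST from `σ₀` propagates to every reachable state: if some scheduler, started at a successor
`s'` of `s`, missed `term` with positive probability, then playing the action leading to `s'`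
first and following that scheduler afterwards would miss `term` from `s` as well.
The schedulers form a compact space (a product of finite discrete sets of actions), on which
the finite-horizon termination probabilities are continuous and increase to `1`; hence a single
horizon `n` gives termination probability `> 1 - p` under every scheduler. Let `Ψ` consist of
`term` and the states reachable from `σ` within `n` steps. A run that terminates within `n`
steps never leaves `Ψ`, so `Ψ` is left with probability at most `p`; and since every run
terminates almost surely, it visits `term` or leaves `Ψ` almost surely.
-/

theorem PMF.tsum_mul_le_one {α : Type*} (μ : PMF α) {f : α → ℝ≥0∞}
    (hf : ∀ a ∈ μ.support, f a ≤ 1) : ∑' a, μ a * f a ≤ 1 := by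
  calc ∑' a, μ a * f a ≤ ∑' a, μ a := ENNReal.tsum_le_tsum fun a => by
        by_cases ha : a ∈ μ.support
        · exact mul_le_of_le_one_right zero_le (hf a ha)
        · rw [(μ.apply_eq_zero_iff a).mpr ha, zero_mul]
    _ = 1 := μ.tsum_coe

theorem PMF.eq_one_of_tsum_mul_eq_one {α : Type*} (μ : PMF α) {f : α → ℝ≥0∞}
    (hf : ∀ a, f a ≤ 1) (h : ∑' a, μ a * f a = 1) {a : α} (ha : a ∈ μ.support) :
    f a = 1 := by
  by_contra hfa
  have hlt : μ a * f a < μ a * 1 :=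
    (ENNReal.mul_lt_mul_iff_right ((μ.mem_support_iff a).mp ha) (μ.apply_ne_top a)).mpr
      ((hf a).lt_of_ne hfa)
  have := ENNReal.tsum_lt_tsum (by simp [h]) (fun b => mul_le_of_le_one_right zero_le (hf b))
    (hlt.trans_eq (mul_one _))
  rw [h, μ.tsum_coe] at this
  exact lt_irrefl 1 this

theorem PMF.continuous_tsum_mul {α X : Type*} [TopologicalSpace X] (ν : PMF α)
    (hν : ν.support.Finite) {g : α → X → ℝ≥0∞} (hg : ∀ a, Continuous (g a)) :
    Continuous fun x => ∑' a, ν a * g a x := by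
  have hsum : (fun x => ∑' a, ν a * g a x) = fun x => ∑ a ∈ hν.toFinset, ν a * g a x :=
    funext fun x => tsum_eq_sum fun a ha => by
      rw [(ν.apply_eq_zero_iff a).mpr (by simpa using ha), zero_mul]
  rw [hsum]
  exact continuous_finsetSum _ fun a _ =>
    (ENNReal.continuous_const_mul (ν.apply_ne_top a)).comp (hg a)

theorem CompactSpace.exists_forall_lt_of_monotone {X α : Type*} [TopologicalSpace X]
    [CompactSpace X] [TopologicalSpace α] [LinearOrder α] [ClosedIicTopology α]
    {f : ℕ → X → α} (hf : ∀ n, Continuous (f n)) (hmono : ∀ x, Monotone fun n => f n x)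
    {c : α} (hc : ∀ x, ∃ n, c < f n x) : ∃ n, ∀ x, c < f n x := by
  obtain ⟨n, hn⟩ := isCompact_univ.elim_directed_cover (fun n => {x | c < f n x})
    (fun n => isOpen_Ioi.preimage (hf n)) (fun x _ => Set.mem_iUnion.mpr (hc x))
    (Monotone.directed_le fun m n hmn x hx => hx.trans_le (hmono x hmn))
  exact ⟨n, fun x => hn (Set.mem_univ x)⟩

namespace MDP

variable {S : Type} {M : MDP S} {𝔰 : Scheduler M} {T : Set S}

theorem hitProbAux_of_mem {s : S} (hs : s ∈ T) (k : ℕ) (hist : List S) :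
    M.hitProbAux 𝔰 T k hist s = 1 := by
  cases k <;> simp [hitProbAux, hs]

theorem hitProbAux_zero_of_notMem {s : S} (hs : s ∉ T) (hist : List S) :
    M.hitProbAux 𝔰 T 0 hist s = 0 := by
  simp [hitProbAux, hs]

theorem hitProbAux_succ_of_notMem {s : S} (hs : s ∉ T) (k : ℕ) (hist : List S) :
    M.hitProbAux 𝔰 T (k + 1) hist s =
      ∑' u, 𝔰.choose hist s u * M.hitProbAux 𝔰 T k (hist ++ [s]) u := by
  simp [hitProbAux, hs]

theorem hitProbAux_le_one (k : ℕ) (hist : List S) (s : S) :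
    M.hitProbAux 𝔰 T k hist s ≤ 1 := by
  induction k generalizing hist s with
  | zero => by_cases hs : s ∈ T <;> simp [hitProbAux, hs]
  | succ k ih =>
    by_cases hs : s ∈ T
    · rw [hitProbAux_of_mem hs]
    · rw [hitProbAux_succ_of_notMem hs]
      exact PMF.tsum_mul_le_one _ fun u _ => ih _ u

theorem hitProbAux_le_succ (k : ℕ) (hist : List S) (s : S) :
    M.hitProbAux 𝔰 T k hist s ≤ M.hitProbAux 𝔰 T (k + 1) hist s := by
  induction k generalizing hist s with
  | zero => by_cases hs : s ∈ T <;> simp [hitProbAux, hs]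
  | succ k ih =>
    by_cases hs : s ∈ T
    · rw [hitProbAux_of_mem hs, hitProbAux_of_mem hs]
    · rw [hitProbAux_succ_of_notMem hs, hitProbAux_succ_of_notMem hs]
      exact ENNReal.tsum_le_tsum fun u => mul_le_mul_right (ih _ u) _

theorem hitProbAux_mono_set {T' : Set S} (hT : T ⊆ T') (k : ℕ) (hist : List S) (s : S) :
    M.hitProbAux 𝔰 T k hist s ≤ M.hitProbAux 𝔰 T' k hist s := by
  induction k generalizing hist s with
  | zero =>
    by_cases hs : s ∈ T
    · simp [hitProbAux, hs, hT hs]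
    · simp [hitProbAux, hs]
  | succ k ih =>
    by_cases hs' : s ∈ T'
    · rw [hitProbAux_of_mem hs']
      exact hitProbAux_le_one _ hist s
    rw [hitProbAux_succ_of_notMem (fun h => hs' (hT h)), hitProbAux_succ_of_notMem hs']
    exact ENNReal.tsum_le_tsum fun u => mul_le_mul_right (ih _ u) _

theorem hitProbWithin_mono (σ : S) : Monotone (M.hitProbWithin 𝔰 σ T) :=
  monotone_nat_of_le_succ fun k => hitProbAux_le_succ k [] σ

theorem hitProbWithin_le_hitProb (σ : S) (k : ℕ) :
    M.hitProbWithin 𝔰 σ T k ≤ M.hitProb 𝔰 σ T :=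
  le_iSup (M.hitProbWithin 𝔰 σ T) k

theorem hitProb_le_one (σ : S) : M.hitProb 𝔰 σ T ≤ 1 :=
  iSup_le fun k => hitProbAux_le_one k [] σ

theorem hitProb_of_mem {σ : S} (hσ : σ ∈ T) : M.hitProb 𝔰 σ T = 1 :=
  le_antisymm (hitProb_le_one σ) ((hitProbAux_of_mem hσ 0 []).symm.le.trans
    (hitProbWithin_le_hitProb σ 0))

theorem hitProb_mono_set {T' : Set S} (hT : T ⊆ T') (σ : S) :
    M.hitProb 𝔰 σ T ≤ M.hitProb 𝔰 σ T' :=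
  iSup_mono fun k => hitProbAux_mono_set hT k [] σ

theorem eq_pure_of_absorbing {term : S} (hterm : M.Absorbing term) {μ : PMF S}
    (hμ : μ ∈ M.act term) : μ = PMF.pure term := by
  rw [Absorbing] at hterm
  simpa [hterm] using hμ

theorem hitProbAux_absorbing_eq_zero {term : S} (hterm : M.Absorbing term) (hT : term ∉ T)
    (k : ℕ) (hist : List S) : M.hitProbAux 𝔰 T k hist term = 0 := by
  induction k generalizing hist with
  | zero => exact hitProbAux_zero_of_notMem hT hist
  | succ k ih =>
    rw [hitProbAux_succ_of_notMem hT, eq_pure_of_absorbing hterm (𝔰.choose_mem hist term)]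
    simp [ih]

noncomputable def _root_.Scheduler.playFirst (𝔰 : Scheduler M) (μ : PMF S) : Scheduler M where
  choose
    | [], t => if μ ∈ M.act t then μ else 𝔰.choose [] t
    | _ :: hist, t => 𝔰.choose hist t
  choose_mem
    | [], t => by
      dsimp only
      split_ifs with h
      · exact h
      · exact 𝔰.choose_mem [] t
    | _ :: hist, t => 𝔰.choose_mem hist t

theorem hitProbAux_playFirst_cons (μ : PMF S) (k : ℕ) (s : S) (hist : List S) (t : S) :
    M.hitProbAux (𝔰.playFirst μ) T k (s :: hist) t = M.hitProbAux 𝔰 T k hist t := by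
  induction k generalizing hist t with
  | zero => rfl
  | succ k ih =>
    by_cases ht : t ∈ T
    · rw [hitProbAux_of_mem ht, hitProbAux_of_mem ht]
    · rw [hitProbAux_succ_of_notMem ht, hitProbAux_succ_of_notMem ht]
      exact tsum_congr fun u => congrArg _ (ih (hist ++ [t]) u)

theorem hitProb_playFirst_le {s : S} (hs : s ∉ T) {μ : PMF S} (hμ : μ ∈ M.act s) :
    M.hitProb (𝔰.playFirst μ) s T ≤ ∑' u, μ u * M.hitProb 𝔰 u T := by
  refine iSup_le fun k => ?_
  cases k with
  | zero => simp [hitProbWithin, hitProbAux_zero_of_notMem hs]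
  | succ k =>
    have hchoose : (𝔰.playFirst μ).choose [] s = μ := if_pos hμ
    rw [hitProbWithin, hitProbAux_succ_of_notMem hs, hchoose]
    exact ENNReal.tsum_le_tsum fun u => mul_le_mul_right
      ((hitProbAux_playFirst_cons μ k s [] u).trans_le (hitProbWithin_le_hitProb u k)) _

theorem hitProb_eq_one_of_mem_support {s s' : S} (hs : s ∉ T) {μ : PMF S} (hμ : μ ∈ M.act s)
    (hs' : s' ∈ μ.support) (h : ∀ 𝔰 : Scheduler M, M.hitProb 𝔰 s T = 1)
    (𝔰 : Scheduler M) : M.hitProb 𝔰 s' T = 1 := by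
  refine μ.eq_one_of_tsum_mul_eq_one (f := fun u => M.hitProb 𝔰 u T)
    (fun u => hitProb_le_one u) (le_antisymm ?_ ?_) hs'
  · exact μ.tsum_mul_le_one fun u _ => hitProb_le_one u
  · exact (h (𝔰.playFirst μ)).symm.le.trans (hitProb_playFirst_le hs hμ)

theorem hitProb_eq_one_of_reach {term σ₀ : S} (hterm : M.Absorbing term)
    (hAST : M.AST term σ₀) {σ : S} (hσ : M.Reach σ₀ σ) (𝔰 : Scheduler M) :
    M.hitProb 𝔰 σ {term} = 1 := by
  induction hσ generalizing 𝔰 with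
  | refl => exact le_antisymm (hitProb_le_one σ₀) (hAST.symm.le.trans (iInf_le _ 𝔰))
  | @step s s' μ _ hμ hs' ih =>
    by_cases hst : s = term
    · subst hst
      rw [eq_pure_of_absorbing hterm hμ, PMF.support_pure] at hs'
      rw [hs']
      exact hitProb_of_mem rfl
    · exact hitProb_eq_one_of_mem_support (Set.mem_singleton_iff.not.mpr hst) hμ hs' ih 𝔰

def ActionChoice (M : MDP S) (t : S) : Type := {μ : PMF S // μ ∈ M.act t}

instance (t : S) : TopologicalSpace (M.ActionChoice t) := ⊥

instance (t : S) : DiscreteTopology (M.ActionChoice t) := ⟨rfl⟩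

instance (t : S) : Finite (M.ActionChoice t) :=
  inferInstanceAs (Finite {μ : PMF S // μ ∈ M.act t})

/-- Every scheduler arises this way, so by Tychonoff the schedulers form a compact space. -/
def schedulerOfPi (f : ∀ h : List S × S, M.ActionChoice h.2) : Scheduler M where
  choose hist t := (f (hist, t)).1
  choose_mem hist t := (f (hist, t)).2

theorem continuous_hitProbAux_schedulerOfPi (T : Set S) (k : ℕ) (hist : List S) (t : S) :
    Continuous fun f : ∀ h : List S × S, M.ActionChoice h.2 =>
      M.hitProbAux (M.schedulerOfPi f) T k hist t := by
  induction k generalizing hist t with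
  | zero => simp only [hitProbAux]; exact continuous_const
  | succ k ih =>
    by_cases ht : t ∈ T
    · simp only [hitProbAux_of_mem ht]; exact continuous_const
    simp only [hitProbAux_succ_of_notMem ht]
    have hstep :
        Continuous fun p : M.ActionChoice t × (∀ h : List S × S, M.ActionChoice h.2) =>
        ∑' u, p.1.1 u * M.hitProbAux (M.schedulerOfPi p.2) T k (hist ++ [t]) u :=
      continuous_prod_of_discrete_left.mpr fun a =>
        a.1.continuous_tsum_mul (M.act_finSupp t a.1 a.2) fun u => ih _ u
    exact hstep.comp (f := fun f => (f (hist, t), f))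
      ((continuous_apply (hist, t)).prodMk continuous_id)

theorem exists_hitProbWithin_gt {σ : S} (h : ∀ 𝔰 : Scheduler M, M.hitProb 𝔰 σ T = 1)
    {c : ℝ≥0∞} (hc : c < 1) :
    ∃ n, ∀ 𝔰 : Scheduler M, c < M.hitProbWithin 𝔰 σ T n := by
  obtain ⟨n, hn⟩ := CompactSpace.exists_forall_lt_of_monotone
    (f := fun n f => M.hitProbWithin (M.schedulerOfPi f) σ T n)
    (fun n => continuous_hitProbAux_schedulerOfPi T n [] σ)
    (fun f => hitProbWithin_mono σ)
    (fun f => lt_iSup_iff.mp (hc.trans_eq (h (M.schedulerOfPi f)).symm))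
  exact ⟨n, fun 𝔰 => hn fun h => ⟨𝔰.choose h.1 h.2, 𝔰.choose_mem h.1 h.2⟩⟩

def reachWithin (M : MDP S) : ℕ → S → Set S
  | 0, s => {s}
  | n + 1, s => insert s (⋃ μ ∈ M.act s, ⋃ u ∈ μ.support, M.reachWithin n u)

theorem finite_reachWithin (n : ℕ) (s : S) : (M.reachWithin n s).Finite := by
  induction n generalizing s with
  | zero => exact Set.finite_singleton s
  | succ n ih =>
    exact ((M.act s).finite_toSet.biUnion fun μ hμ =>
      (M.act_finSupp s μ hμ).biUnion fun u _ => ih u).insert s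

theorem self_mem_reachWithin (n : ℕ) (s : S) : s ∈ M.reachWithin n s := by
  cases n
  · rfl
  · exact Set.mem_insert s _

theorem reachWithin_subset_succ_of_mem_support {s u : S} {μ : PMF S} (hμ : μ ∈ M.act s)
    (hu : u ∈ μ.support) (n : ℕ) : M.reachWithin n u ⊆ M.reachWithin (n + 1) s :=
  fun _ hx => Set.mem_insert_of_mem s (Set.mem_biUnion hμ (Set.mem_biUnion hu hx))

/-- A run that enters `B` within `m` steps has stayed outside `A` until then, and never
reaches `A` afterwards; so the two events are disjoint. -/
theorem hitProbAux_add_hitProbAux_le_one {A B : Set S}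
    (hB : ∀ b ∈ B, ∀ k hist, M.hitProbAux 𝔰 A k hist b = 0) (m k : ℕ) (hist : List S)
    {s : S} (hs : M.reachWithin m s ⊆ Aᶜ) :
    M.hitProbAux 𝔰 A k hist s + M.hitProbAux 𝔰 B m hist s ≤ 1 := by
  induction m generalizing k hist s with
  | zero =>
    by_cases hsB : s ∈ B
    · rw [hB s hsB, zero_add]; exact hitProbAux_le_one 0 hist s
    · rw [hitProbAux_zero_of_notMem hsB, add_zero]; exact hitProbAux_le_one k hist s
  | succ m ih =>
    by_cases hsB : s ∈ B
    · rw [hB s hsB, zero_add]; exact hitProbAux_le_one _ hist s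
    have hsA : s ∉ A := hs (self_mem_reachWithin _ s)
    cases k with
    | zero => rw [hitProbAux_zero_of_notMem hsA, zero_add]; exact hitProbAux_le_one _ hist s
    | succ k =>
      rw [hitProbAux_succ_of_notMem hsA, hitProbAux_succ_of_notMem hsB, ← ENNReal.tsum_add]
      simp_rw [← mul_add]
      exact PMF.tsum_mul_le_one _ fun u hu => ih k (hist ++ [s])
        ((reachWithin_subset_succ_of_mem_support (𝔰.choose_mem hist s) hu m).trans hs)

theorem hitProb_add_hitProbWithin_le_one {A B : Set S}
    (hB : ∀ b ∈ B, ∀ k hist, M.hitProbAux 𝔰 A k hist b = 0) {m : ℕ} {σ : S}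
    (hσ : M.reachWithin m σ ⊆ Aᶜ) :
    M.hitProb 𝔰 σ A + M.hitProbWithin 𝔰 σ B m ≤ 1 := by
  rw [hitProb, ENNReal.iSup_add]
  exact iSup_le fun k => hitProbAux_add_hitProbAux_le_one hB m k [] hσ

end MDP

theorem si_rule_for_ast_complete_general {S : Type} (M : MDP S) (term σ₀ : S)
    (hterm : M.Absorbing term) (hAST : M.AST term σ₀)
    (p : ℝ) (hp0 : 0 < p) :
    ∀ σ : S, M.Reach σ₀ σ → ∃ Ψ : Set S, Ψ.Finite ∧ σ ∈ Ψ ∧ term ∈ Ψ ∧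
      M.StochasticInvariant σ Ψ p ∧
      ∀ 𝔰 : Scheduler M, M.hitProb 𝔰 σ ({term} ∪ Ψᶜ) = 1 := by
  intro σ hσ
  have hσ_term := MDP.hitProb_eq_one_of_reach hterm hAST hσ
  obtain ⟨n, hn⟩ := MDP.exists_hitProbWithin_gt hσ_term (c := 1 - ENNReal.ofReal p)
    (ENNReal.sub_lt_self ENNReal.one_ne_top one_ne_zero (ENNReal.ofReal_pos.mpr hp0).ne')
  refine ⟨M.reachWithin n σ ∪ {term},
    (MDP.finite_reachWithin n σ).union (Set.finite_singleton term),
    Or.inl (MDP.self_mem_reachWithin n σ), Or.inr rfl, iSup_le fun 𝔰 => ?_, fun 𝔰 => ?_⟩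
  · have hdisj := MDP.hitProb_add_hitProbWithin_le_one (𝔰 := 𝔰) (B := {term})
      (by rintro b rfl; exact MDP.hitProbAux_absorbing_eq_zero hterm fun h => h (Or.inr rfl))
      (compl_compl (M.reachWithin n σ ∪ {term}) ▸ Set.subset_union_left)
    calc M.hitProb 𝔰 σ (M.reachWithin n σ ∪ {term})ᶜ
        ≤ 1 - M.hitProbWithin 𝔰 σ {term} n := ENNReal.le_sub_of_add_le_right
          (ne_top_of_le_ne_top ENNReal.one_ne_top (MDP.hitProbAux_le_one n [] σ)) hdisj
      _ ≤ 1 - (1 - ENNReal.ofReal p) := tsub_le_tsub_left (hn 𝔰).le 1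
      _ ≤ ENNReal.ofReal p := tsub_tsub_le
  · exact le_antisymm (MDP.hitProb_le_one σ)
      ((hσ_term 𝔰).symm.le.trans (MDP.hitProb_mono_set Set.subset_union_left σ))

/-- **Completeness of the stochastic-invariant rule for AST.** If `M` is almost surely
terminating from its initial state `σ₀` and `p ∈ (0,1)`, then for every state `σ` reachable
from `σ₀` there is a finite set `Ψ` containing `σ` and the terminal state such that
`(Ψ, p)` is a stochastic invariant for initial state `σ` and, under every scheduler, the
run started at `σ` almost surely either visits the terminal state or leaves `Ψ`. -/
theorem si_rule_for_ast_complete {S : Type} [Countable S] (M : MDP S) (term σ₀ : S)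
    (hterm : M.Absorbing term) (hAST : M.AST term σ₀)
    (p : ℝ) (hp0 : 0 < p) (hp1 : p < 1) :
    ∀ σ : S, M.Reach σ₀ σ → ∃ Ψ : Set S, Ψ.Finite ∧ σ ∈ Ψ ∧ term ∈ Ψ ∧
      M.StochasticInvariant σ Ψ p ∧
      ∀ 𝔰 : Scheduler M, M.hitProb 𝔰 σ ({term} ∪ Ψᶜ) = 1 :=
  si_rule_for_ast_complete_general M term σ₀ hterm hAST p hp0
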